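/- The forest dimension of a digraph is at least the number of its weak components and at most the number of its strong components. -/

import Mathlib

open scoped Classical

/-- The arc relation of a finite arc set. -/
def arcRel {V : Type*} [DecidableEq V] (F : Finset (V × V)) : V → V → Prop :=
  fun a b => (a, b) ∈ F

/-- A diverging forest: no directed cycles, and every vertex has in-degree at most 1. -/
def IsDivForest {V : Type*} [DecidableEq V] (F : Finset (V × V)) : Prop :=
  (∀ v, ¬ Relation.TransGen (arcRel F) v v) ∧
  ∀ w z₁ z₂, (z₁, w) ∈ F → (z₂, w) ∈ F → z₁ = z₂

/-- The maximum number of arcs in a spanning diverging forest of `E`. -/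
noncomputable def maxArcs {V : Type*} [Fintype V] [DecidableEq V]
    (E : Finset (V × V)) : ℕ :=
  (Finset.univ.filter (fun F : Finset (V × V) => F ⊆ E ∧ IsDivForest F)).sup Finset.card

/-- The forest dimension of the digraph with arc set `E`. -/
noncomputable def forestDim {V : Type*} [Fintype V] [DecidableEq V]
    (E : Finset (V × V)) : ℕ :=
  Fintype.card V - maxArcs E

/-- Connectedness by a semipath (weak connectedness). -/
def weakReach {V : Type*} [DecidableEq V] (E : Finset (V × V)) : V → V → Prop :=
  Relation.ReflTransGen (fun a b => arcRel E a b ∨ arcRel E b a)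

/-- The set of weak components of `E`. -/
def weakComponents {V : Type*} [DecidableEq V] (E : Finset (V × V)) : Set (Set V) :=
  {C | ∃ v : V, C = {u | weakReach E v u}}

/-- The set of strong components of `E`. -/
def strongComponents {V : Type*} [DecidableEq V] (E : Finset (V × V)) : Set (Set V) :=
  {C | ∃ v : V, C = {u | Relation.ReflTransGen (arcRel E) v u ∧
    Relation.ReflTransGen (arcRel E) u v}}

/-!
Lower bound: a diverging forest `F` has exactly `|V| - |F|` roots (vertices without an in-arc),
and walking backwards along the arcs of `F` from any vertex ends at a root, so every weak
component contains a root.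

Upper bound: fix a representative in each strong component and give every other vertex `v`
the last vertex before `v` on a shortest walk from its representative as parent. That parent
lies in the strong component of `v` and is strictly closer to the common representative, so
the parent arcs form a diverging forest whose roots are exactly the representatives.
-/

open Relation Finset

section Forests

variable {V : Type*} [DecidableEq V]

lemma isDivForest_empty : IsDivForest (∅ : Finset (V × V)) := by
  refine ⟨fun v h => ?_, fun _ _ _ h => absurd h (notMem_empty _)⟩
  obtain ⟨_, _, h⟩ := TransGen.tail'_iff.1 h
  exact notMem_empty _ h

lemma IsDivForest.card_image_snd {F : Finset (V × V)} (hF : IsDivForest F) :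
    (F.image Prod.snd).card = F.card := by
  refine card_image_of_injOn fun a ha b hb (hab : a.2 = b.2) => Prod.ext ?_ hab
  exact hF.2 a.2 a.1 b.1 ha (hab ▸ hb)

lemma isDivForest_image_parent [Fintype V] (R : Finset V) (p : V → V) (φ : V → ℕ)
    (hφ : ∀ v ∉ R, φ (p v) < φ v) : IsDivForest (Rᶜ.image fun v => (p v, v)) := by
  have mem : ∀ {z w}, (z, w) ∈ Rᶜ.image (fun v => (p v, v)) ↔ w ∉ R ∧ z = p w := by
    intro z w
    simp only [mem_image, mem_compl, Prod.mk.injEq]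
    constructor
    · rintro ⟨v, hv, rfl, rfl⟩; exact ⟨hv, rfl⟩
    · rintro ⟨hw, rfl⟩; exact ⟨w, hw, rfl, rfl⟩
  have lt_of_transGen : ∀ {a b}, TransGen (arcRel (Rᶜ.image fun v => (p v, v))) a b →
      φ a < φ b := by
    intro a b h
    induction h with
    | single h => obtain ⟨hb, rfl⟩ := mem.1 h; exact hφ _ hb
    | tail _ h ih => obtain ⟨hc, rfl⟩ := mem.1 h; exact ih.trans (hφ _ hc)
  refine ⟨fun v h => (lt_of_transGen h).false, fun w z₁ z₂ h₁ h₂ => ?_⟩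
  rw [(mem.1 h₁).2, (mem.1 h₂).2]

lemma card_image_parent [Fintype V] (R : Finset V) (p : V → V) :
    (Rᶜ.image fun v => (p v, v)).card = Fintype.card V - R.card := by
  rw [card_image_of_injective _ fun a b h => (Prod.mk.inj h).2, card_compl]

end Forests

section Weak

variable {V : Type*} [DecidableEq V]

lemma weakReach_symm (E : Finset (V × V)) {a b : V} (h : weakReach E a b) :
    weakReach E b a := by
  have : Std.Symm fun a b : V => arcRel E a b ∨ arcRel E b a := ⟨fun _ _ h => h.symm⟩
  exact Std.Symm.symm (r := ReflTransGen _) _ _ h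

lemma exists_weakReach_notMem_image_snd [Finite V] {E F : Finset (V × V)} (hFE : F ⊆ E)
    (hF : ∀ v, ¬ TransGen (arcRel F) v v) (v : V) :
    ∃ u ∉ F.image Prod.snd, weakReach E v u := by
  have : IsTrans V (TransGen (arcRel F)) := ⟨fun _ _ _ => TransGen.trans⟩
  have : Std.Irrefl (TransGen (arcRel F)) := ⟨hF⟩
  obtain ⟨u, hu, hmin⟩ := (Finite.wellFounded_of_trans_of_irrefl (TransGen (arcRel F))).has_min
    {u | weakReach E v u} ⟨v, .refl⟩
  refine ⟨u, fun hroot => ?_, hu⟩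
  obtain ⟨⟨z, _⟩, hz, rfl⟩ := mem_image.1 hroot
  exact hmin z (ReflTransGen.tail hu (Or.inr (hFE hz))) (.single hz)

lemma ncard_weakComponents_add_card_le [Fintype V] {E F : Finset (V × V)} (hFE : F ⊆ E)
    (hF : IsDivForest F) : (weakComponents E).ncard + F.card ≤ Fintype.card V := by
  have hcover : weakComponents E ⊆
      (fun v => {u | weakReach E v u}) '' ↑(F.image Prod.snd)ᶜ := by
    rintro _ ⟨v, rfl⟩
    obtain ⟨u, hu, hvu⟩ := exists_weakReach_notMem_image_snd hFE hF.1 v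
    refine ⟨u, by simpa using hu, Set.ext fun w => ⟨fun h => hvu.trans h, fun h => ?_⟩⟩
    exact (weakReach_symm E hvu).trans h
  have hle := (Set.ncard_le_ncard hcover).trans (Set.ncard_image_le (Set.toFinite _))
  rw [Set.ncard_coe_finset, card_compl, hF.card_image_snd] at hle
  have := card_le_univ (F.image Prod.snd)
  rw [hF.card_image_snd] at this
  omega

end Weak

section Strong

variable {V : Type*} [DecidableEq V] (E : Finset (V × V))

def reachIn : ℕ → V → V → Prop
  | 0, a, b => a = b
  | n + 1, a, b => ∃ c, reachIn n a c ∧ arcRel E c b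

lemma reflTransGen_iff_exists_reachIn {a b : V} :
    ReflTransGen (arcRel E) a b ↔ ∃ n, reachIn E n a b := by
  constructor
  · intro h
    induction h with
    | refl => exact ⟨0, rfl⟩
    | tail _ hbc ih => obtain ⟨n, hn⟩ := ih; exact ⟨n + 1, _, hn, hbc⟩
  · rintro ⟨n, hn⟩
    induction n generalizing b with
    | zero => cases hn; exact .refl
    | succ n ih => obtain ⟨c, hc, hcb⟩ := hn; exact (ih hc).tail hcb

def strongSetoid : Setoid V where
  r u v := ReflTransGen (arcRel E) u v ∧ ReflTransGen (arcRel E) v u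
  iseqv := ⟨fun _ => ⟨.refl, .refl⟩, fun h => ⟨h.2, h.1⟩,
    fun h h' => ⟨h.1.trans h'.1, h'.2.trans h.2⟩⟩

noncomputable def strongRep (v : V) : V := (Quotient.mk (strongSetoid E) v).out

lemma strongRep_equiv (v : V) : strongSetoid E (strongRep E v) v := Quotient.mk_out v

lemma strongRep_eq_of_equiv {u v : V} (h : strongSetoid E u v) : strongRep E u = strongRep E v :=
  congrArg Quotient.out (Quotient.sound h)

lemma exists_reachIn_strongRep (v : V) : ∃ n, reachIn E n (strongRep E v) v :=
  (reflTransGen_iff_exists_reachIn E).1 (strongRep_equiv E v).1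

noncomputable def strongDepth (v : V) : ℕ := Nat.find (exists_reachIn_strongRep E v)

lemma exists_parent_of_strongRep_ne {v : V} (hv : strongRep E v ≠ v) :
    ∃ c, (c, v) ∈ E ∧ strongDepth E c < strongDepth E v := by
  have hspec : reachIn E (strongDepth E v) (strongRep E v) v :=
    Nat.find_spec (exists_reachIn_strongRep E v)
  obtain ⟨m, hm⟩ := Nat.exists_eq_succ_of_ne_zero fun (h0 : strongDepth E v = 0) =>
    hv (by rw [h0] at hspec; exact hspec)
  rw [hm] at hspec
  obtain ⟨c, hc, hcv⟩ := hspec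
  have hcequiv : strongSetoid E c v :=
    ⟨.single hcv, (strongRep_equiv E v).2.trans ((reflTransGen_iff_exists_reachIn E).2 ⟨m, hc⟩)⟩
  have hdepth : strongDepth E c ≤ m :=
    Nat.find_min' _ (by rw [strongRep_eq_of_equiv E hcequiv]; exact hc)
  exact ⟨c, hcv, by omega⟩

lemma card_strongRep_fixed_le [Fintype V] :
    (univ.filter fun v => strongRep E v = v).card ≤ (strongComponents E).ncard := by
  rw [← Set.ncard_coe_finset]
  refine Set.ncard_le_ncard_of_injOn (fun v => {u | strongSetoid E v u})
    (fun v _ => ⟨v, rfl⟩) (fun a ha b hb hab => ?_) (Set.toFinite _)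
  have hequiv : strongSetoid E a b := (Set.ext_iff.1 hab b).2 ((strongSetoid E).refl b)
  simp only [coe_filter, mem_univ, true_and, Set.mem_ofPred_eq] at ha hb
  rw [← ha, ← hb, strongRep_eq_of_equiv E hequiv]

lemma exists_isDivForest_card_add_ncard_strongComponents_ge [Fintype V] :
    ∃ F ⊆ E, IsDivForest F ∧ Fintype.card V ≤ F.card + (strongComponents E).ncard := by
  set R := univ.filter fun v => strongRep E v = v
  have hparent : ∀ v, ∃ c, v ∉ R → (c, v) ∈ E ∧ strongDepth E c < strongDepth E v := by
    intro v
    by_cases hv : v ∈ R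
    · exact ⟨v, fun h => absurd hv h⟩
    · obtain ⟨c, hc⟩ := exists_parent_of_strongRep_ne E (by simpa [R] using hv)
      exact ⟨c, fun _ => hc⟩
  choose p hp using hparent
  refine ⟨Rᶜ.image fun v => (p v, v), ?_, ?_, ?_⟩
  · intro e he
    obtain ⟨v, hv, rfl⟩ := mem_image.1 he
    exact (hp v (mem_compl.1 hv)).1
  · exact isDivForest_image_parent R p (strongDepth E) fun v hv => (hp v hv).2
  · have hR : R.card ≤ (strongComponents E).ncard := card_strongRep_fixed_le E
    have := card_le_univ R
    rw [card_image_parent]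
    omega

end Strong

lemma exists_isDivForest_card_eq_maxArcs {V : Type*} [Fintype V] [DecidableEq V]
    (E : Finset (V × V)) : ∃ F ⊆ E, IsDivForest F ∧ F.card = maxArcs E := by
  obtain ⟨F, hF, hmax⟩ := exists_mem_eq_sup
    (univ.filter fun F : Finset (V × V) => F ⊆ E ∧ IsDivForest F)
    ⟨∅, by simpa using isDivForest_empty⟩ card
  simp only [mem_filter, mem_univ, true_and] at hF
  exact ⟨F, hF.1, hF.2, hmax.symm⟩

lemma card_le_maxArcs {V : Type*} [Fintype V] [DecidableEq V] {E F : Finset (V × V)}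
    (hFE : F ⊆ E) (hF : IsDivForest F) : F.card ≤ maxArcs E :=
  le_sup (f := card) (by simpa using ⟨hFE, hF⟩)

/-- The forest dimension lies between the number of weak components and the number of
strong components. -/
theorem stmt10 {V : Type*} [Fintype V] [DecidableEq V] (E : Finset (V × V)) :
    (weakComponents E).ncard ≤ forestDim E ∧
      forestDim E ≤ (strongComponents E).ncard := by
  obtain ⟨F, hFE, hF, hFmax⟩ := exists_isDivForest_card_eq_maxArcs E
  have hweak := ncard_weakComponents_add_card_le hFE hF
  obtain ⟨G, hGE, hG, hGcard⟩ := exists_isDivForest_card_add_ncard_strongComponents_ge E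
  have hGmax := card_le_maxArcs hGE hG
  unfold forestDim
  omega
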